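/- arXiv:2006.11947 — 3 statements merged into one kernel-verified Lean document; each statement's English description precedes it below -/
import Mathlib

section
/- For any finite simple graph G with m edges and degeneracy α, the sum over all edges e = {u,v} of min(d(u), d(v)) is at most 2mα, where d denotes vertex degree. -/
/-!
Weight each edge `s(u, v)` by `min (d u) (d v)`. Every nonempty vertex set `s` contains a vertex
`v` with at most `α` neighbours in `s`; the edges of `G[s]` at `v` weigh at most `d v` each, hence
at most `α · d v` together. Removing `v` and inducting, the edges of `G[s]` weigh at most
`α · ∑_{v ∈ s} d v`, which for `s = V` is `2 m α` by the handshake lemma.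
-/

open Finset

theorem Sym2.lift_min_le_of_mem {V : Type*} (f : V → ℕ) {v : V} {e : Sym2 V} (hv : v ∈ e) :
    Sym2.lift ⟨fun u w => min (f u) (f w), fun _ _ => min_comm _ _⟩ e ≤ f v := by
  obtain ⟨u, rfl⟩ := Sym2.mem_iff_exists.mp hv
  exact min_le_left _ _

namespace SimpleGraph

variable {V : Type*} [Fintype V] [DecidableEq V] (G : SimpleGraph V) [DecidableRel G.Adj]

def DegeneracyLE (k : ℕ) : Prop :=
  ∀ s : Finset V, s.Nonempty → ∃ v ∈ s, #{u ∈ s | G.Adj v u} ≤ k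

theorem card_filter_edgeFinset_sym2_mem_le (s : Finset V) (v : V) :
    #{e ∈ G.edgeFinset | e ∈ s.sym2 ∧ v ∈ e} ≤ #{u ∈ s | G.Adj v u} := by
  refine (card_le_card fun e he => ?_).trans (card_image_le (f := fun u => s(v, u)))
  obtain ⟨heG, hes, hve⟩ := by simpa only [mem_filter] using he
  obtain ⟨u, rfl⟩ := Sym2.mem_iff_exists.mp hve
  exact mem_image.mpr ⟨u, mem_filter.mpr ⟨mk_mem_sym2_iff.mp hes |>.2, by simpa using heG⟩, rfl⟩

theorem filter_edgeFinset_sym2_not_mem_eq_erase (s : Finset V) (v : V) :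
    {e ∈ G.edgeFinset | e ∈ s.sym2 ∧ v ∉ e} = {e ∈ G.edgeFinset | e ∈ (s.erase v).sym2} := by
  ext e
  simp only [mem_filter, mem_sym2_iff, mem_erase]
  grind

variable {G}

theorem sum_lift_min_edgeFinset_sym2_le {α : ℕ} (hG : G.DegeneracyLE α) (f : V → ℕ)
    (s : Finset V) :
    ∑ e ∈ G.edgeFinset with e ∈ s.sym2,
      Sym2.lift ⟨fun u w => min (f u) (f w), fun _ _ => min_comm _ _⟩ e ≤ α * ∑ v ∈ s, f v := by
  induction s using Finset.strongInduction with
  | H s ih =>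
    obtain rfl | hs := s.eq_empty_or_nonempty
    · simp
    obtain ⟨v, hv, hdeg⟩ := hG s hs
    set w : Sym2 V → ℕ := Sym2.lift ⟨fun u w => min (f u) (f w), fun _ _ => min_comm _ _⟩
    have incident : ∑ e ∈ G.edgeFinset with e ∈ s.sym2 ∧ v ∈ e, w e ≤ α * f v :=
      calc ∑ e ∈ G.edgeFinset with e ∈ s.sym2 ∧ v ∈ e, w e
          ≤ #{e ∈ G.edgeFinset | e ∈ s.sym2 ∧ v ∈ e} • f v :=
            sum_le_card_nsmul _ _ _ fun e he => Sym2.lift_min_le_of_mem f (mem_filter.mp he).2.2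
        _ ≤ α * f v := by
            rw [smul_eq_mul]
            gcongr
            exact (G.card_filter_edgeFinset_sym2_mem_le s v).trans hdeg
    have rest : ∑ e ∈ G.edgeFinset with e ∈ s.sym2 ∧ v ∉ e, w e ≤ α * ∑ u ∈ s.erase v, f u := by
      rw [G.filter_edgeFinset_sym2_not_mem_eq_erase]
      exact ih _ (erase_ssubset hv)
    calc ∑ e ∈ G.edgeFinset with e ∈ s.sym2, w e
        = ∑ e ∈ G.edgeFinset with e ∈ s.sym2 ∧ v ∈ e, w e
          + ∑ e ∈ G.edgeFinset with e ∈ s.sym2 ∧ v ∉ e, w e := by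
          simp only [← filter_filter, sum_filter_add_sum_filter_not]
      _ ≤ α * f v + α * ∑ u ∈ s.erase v, f u := add_le_add incident rest
      _ = α * ∑ u ∈ s, f u := by rw [← mul_add, add_sum_erase _ _ hv]

end SimpleGraph

/-- If `α` is (at least) the degeneracy of `G`, i.e. every nonempty induced subgraph
has a vertex of (induced) degree at most `α`, then
`∑_{e={u,v}∈E} min(d(u), d(v)) ≤ 2 m α`. -/
theorem stmt1 {V : Type*} [Fintype V] [DecidableEq V]
    (G : SimpleGraph V) [DecidableRel G.Adj] (α : ℕ)
    (hα : ∀ s : Finset V, s.Nonempty →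
      ∃ v ∈ s, (s.filter (fun u => G.Adj v u)).card ≤ α) :
    ∑ e ∈ G.edgeFinset,
      Sym2.lift ⟨fun u v => min (G.degree u) (G.degree v),
        fun u v => min_comm _ _⟩ e
    ≤ 2 * G.edgeFinset.card * α := by
  calc _ ≤ α * ∑ v, G.degree v := by
        simpa using SimpleGraph.sum_lift_min_edgeFinset_sym2_le hα (fun v => G.degree v) univ
    _ = 2 * #G.edgeFinset * α := by rw [G.sum_degrees_eq_twice_card_edges, mul_comm]
end

section
/- If a graph G has degeneracy α, then the number of triangles in G is at most m·α, where m is the number of edges. -/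
open Finset

section Aux
variable {V : Type*} [Fintype V] [DecidableEq V]
    (G : SimpleGraph V) [DecidableRel G.Adj]

/-- 2-cliques containing `v` within `s` are counted by neighbors of `v` in `s`. -/
lemma aux_pair (v : V) (s : Finset V) (hv : v ∈ s) :
    ((G.cliqueFinset 2).filter (fun t => t ⊆ s ∧ v ∈ t)).card
      = (s.filter (fun u => G.Adj v u)).card := by
  symm
  apply Finset.card_bij (fun u _ => ({v, u} : Finset V))
  · intro u hu
    simp only [mem_filter] at hu ⊢
    have hcl : G.IsClique (↑({v, u} : Finset V)) := by
      simp only [Finset.coe_insert, Finset.coe_singleton]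
      exact SimpleGraph.isClique_pair.2 fun _ => hu.2
    refine ⟨?_, ?_, by simp⟩
    · rw [SimpleGraph.mem_cliqueFinset_iff, SimpleGraph.isNClique_iff]
      exact ⟨hcl, Finset.card_pair (G.ne_of_adj hu.2)⟩
    · intro x hx
      rcases Finset.mem_insert.1 hx with rfl | hx
      · exact hv
      · rw [Finset.mem_singleton] at hx; subst hx; exact hu.1
  · intro a ha b hb h
    have : b ∈ ({v, a} : Finset V) := h ▸ (by simp)
    rcases Finset.mem_insert.1 this with rfl | hb'
    · exact absurd (Finset.mem_filter.1 hb).2 (G.irrefl)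
    · exact (Finset.mem_singleton.1 hb').symm
  · intro t ht
    simp only [mem_filter, SimpleGraph.mem_cliqueFinset_iff, SimpleGraph.isNClique_iff] at ht
    obtain ⟨⟨hcl, hcard⟩, hts, hvt⟩ := ht
    obtain ⟨a, b, hab, rfl⟩ := Finset.card_eq_two.1 hcard
    rcases Finset.mem_insert.1 hvt with rfl | hvb
    · refine ⟨b, ?_, rfl⟩
      simp only [mem_filter]
      exact ⟨hts (by simp), hcl (by simp) (by simp) hab⟩
    · rw [Finset.mem_singleton] at hvb; subst hvb
      refine ⟨a, ?_, ?_⟩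
      · simp only [mem_filter]
        exact ⟨hts (by simp), hcl (by simp) (by simp) (Ne.symm hab)⟩
      · rw [Finset.pair_comm]

/-- 3-cliques containing `v` within `s` are counted by 2-cliques in `N_s(v)`. -/
lemma aux_tri (v : V) (s : Finset V) (hv : v ∈ s) :
    ((G.cliqueFinset 3).filter (fun t => t ⊆ s ∧ v ∈ t)).card
      = ((G.cliqueFinset 2).filter
          (fun t => t ⊆ s.filter (fun u => G.Adj v u))).card := by
  symm
  apply Finset.card_bij (fun e _ => insert v e)
  · intro e he
    simp only [mem_filter, SimpleGraph.mem_cliqueFinset_iff] at he ⊢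
    obtain ⟨he2, hes⟩ := he
    have hadj : ∀ b ∈ e, G.Adj v b := fun b hb => (Finset.mem_filter.1 (hes hb)).2
    refine ⟨he2.insert hadj, ?_, by simp⟩
    intro x hx
    rcases Finset.mem_insert.1 hx with rfl | hx
    · exact hv
    · exact (Finset.mem_filter.1 (hes hx)).1
  · intro e1 h1 e2 h2 h
    have hv1 : v ∉ e1 := fun hve =>
      G.irrefl (Finset.mem_filter.1 ((Finset.mem_filter.1 h1).2 hve)).2
    have hv2 : v ∉ e2 := fun hve =>
      G.irrefl (Finset.mem_filter.1 ((Finset.mem_filter.1 h2).2 hve)).2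
    have := congrArg (fun t => Finset.erase t v) h
    simpa [Finset.erase_insert hv1, Finset.erase_insert hv2] using this
  · intro t ht
    simp only [mem_filter, SimpleGraph.mem_cliqueFinset_iff] at ht
    obtain ⟨h3, hts, hvt⟩ := ht
    refine ⟨t.erase v, ?_, ?_⟩
    · simp only [mem_filter, SimpleGraph.mem_cliqueFinset_iff, SimpleGraph.isNClique_iff]
      refine ⟨⟨h3.1.subset (by simp [Finset.coe_subset.2 (Finset.erase_subset v t)]), ?_⟩, ?_⟩
      · rw [Finset.card_erase_of_mem hvt, h3.2]
      · intro x hx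
        have hxt := Finset.mem_erase.1 hx
        exact Finset.mem_filter.2 ⟨hts hxt.2, h3.1 hvt hxt.2 (Ne.symm hxt.1)⟩
    · exact Finset.insert_erase hvt

/-- not-containing-v cliques in s = cliques in s.erase v -/
lemma aux_erase (n : ℕ) (v : V) (s : Finset V) :
    ((G.cliqueFinset n).filter (fun t => t ⊆ s ∧ v ∉ t))
      = ((G.cliqueFinset n).filter (fun t => t ⊆ s.erase v)) := by
  apply Finset.filter_congr
  intro t _
  simp [Finset.subset_erase]

lemma aux_split (n : ℕ) (v : V) (s : Finset V) :
    ((G.cliqueFinset n).filter (fun t => t ⊆ s)).card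
      = ((G.cliqueFinset n).filter (fun t => t ⊆ s.erase v)).card
        + ((G.cliqueFinset n).filter (fun t => t ⊆ s ∧ v ∈ t)).card := by
  rw [← aux_erase G n v s]
  rw [← Finset.filter_filter (fun t => t ⊆ s) (fun t => v ∉ t),
      ← Finset.filter_filter (fun t => t ⊆ s) (fun t => v ∈ t)]
  rw [add_comm]
  exact (Finset.card_filter_add_card_filter_not (fun t => v ∈ t)).symm

variable (α : ℕ)
    (hα : ∀ s : Finset V, s.Nonempty →
      ∃ v ∈ s, (s.filter (fun u => G.Adj v u)).card ≤ α)

include hα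

lemma lemA : ∀ s : Finset V,
    ((G.cliqueFinset 2).filter (fun t => t ⊆ s)).card ≤ s.card * α := by
  intro s
  induction s using Finset.strongInduction with
  | _ s ih =>
    rcases s.eq_empty_or_nonempty with rfl | hne
    · simp [Finset.subset_empty, Finset.filter_eq']
    obtain ⟨v, hv, hdeg⟩ := hα s hne
    rw [aux_split G 2 v s, aux_pair G v s hv]
    have h1 := ih (s.erase v) (Finset.erase_ssubset hv)
    rw [← Finset.card_erase_add_one hv, add_mul, one_mul]
    exact Nat.add_le_add h1 hdeg

lemma lemB : ∀ s : Finset V,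
    ((G.cliqueFinset 3).filter (fun t => t ⊆ s)).card
      ≤ ((G.cliqueFinset 2).filter (fun t => t ⊆ s)).card * α := by
  intro s
  induction s using Finset.strongInduction with
  | _ s ih =>
    rcases s.eq_empty_or_nonempty with rfl | hne
    · simp [Finset.subset_empty, Finset.filter_eq']
    obtain ⟨v, hv, hdeg⟩ := hα s hne
    rw [aux_split G 3 v s, aux_split G 2 v s, aux_tri G v s hv, aux_pair G v s hv]
    have h1 := ih (s.erase v) (Finset.erase_ssubset hv)
    have h2 := lemA G α hα (s.filter (fun u => G.Adj v u))
    rw [add_mul]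
    exact Nat.add_le_add h1 h2

end Aux

lemma edge_card_eq {V : Type*} [Fintype V] [DecidableEq V]
    (G : SimpleGraph V) [DecidableRel G.Adj] :
    G.edgeFinset.card = (G.cliqueFinset 2).card := by
  apply Finset.card_bij
    (fun e _ => Sym2.lift ⟨fun a b => ({a, b} : Finset V),
      fun a b => Finset.pair_comm a b⟩ e)
  · intro e he
    induction e with
    | _ a b =>
      simp only [Sym2.lift_mk]
      rw [SimpleGraph.mem_edgeFinset, SimpleGraph.mem_edgeSet] at he
      rw [SimpleGraph.mem_cliqueFinset_iff, SimpleGraph.isNClique_iff]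
      have hcl : G.IsClique (↑({a, b} : Finset V)) := by
        simp only [Finset.coe_insert, Finset.coe_singleton]
        exact SimpleGraph.isClique_pair.2 fun _ => he
      exact ⟨hcl, Finset.card_pair (G.ne_of_adj he)⟩
  · intro e1 h1 e2 h2 h
    induction e1 with
    | _ a b =>
      induction e2 with
      | _ c d =>
        simp only [Sym2.lift_mk] at h
        rw [SimpleGraph.mem_edgeFinset, SimpleGraph.mem_edgeSet] at h1 h2
        have hc : c ∈ ({a, b} : Finset V) := h ▸ (by simp)
        have hd : d ∈ ({a, b} : Finset V) := h ▸ (by simp)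
        simp only [Finset.mem_insert, Finset.mem_singleton] at hc hd
        have hcd := G.ne_of_adj h2
        rw [Sym2.eq_iff]
        rcases hc with rfl | rfl
        · rcases hd with rfl | rfl
          · exact absurd rfl hcd
          · exact Or.inl ⟨rfl, rfl⟩
        · rcases hd with rfl | rfl
          · exact Or.inr ⟨rfl, rfl⟩
          · exact absurd rfl hcd
  · intro t ht
    rw [SimpleGraph.mem_cliqueFinset_iff, SimpleGraph.isNClique_iff] at ht
    obtain ⟨a, b, hab, rfl⟩ := Finset.card_eq_two.1 ht.2
    have hadj : G.Adj a b := ht.1 (by simp) (by simp) hab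
    exact ⟨s(a, b), SimpleGraph.mem_edgeFinset.2 hadj, rfl⟩

/-- If `G` has degeneracy at most `α` (every nonempty induced subgraph has a vertex
of degree at most `α`), then the number of triangles of `G` is at most `m·α`. -/
theorem stmt3 {V : Type*} [Fintype V] [DecidableEq V]
    (G : SimpleGraph V) [DecidableRel G.Adj] (α : ℕ)
    (hα : ∀ s : Finset V, s.Nonempty →
      ∃ v ∈ s, (s.filter (fun u => G.Adj v u)).card ≤ α) :
    (G.cliqueFinset 3).card ≤ G.edgeFinset.card * α := by
  have h := lemB G α hα Finset.univ
  rw [edge_card_eq]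
  simpa [Finset.filter_true_of_mem (fun t _ => Finset.subset_univ t)] using h
end

section
/- With X_1,…,X_k i.i.d. uniform on a set of size m and C the number of pairwise collisions, Var[C] ≤ binom(k,2)/m + k³/m², and hence by Chebyshev's inequality, for any ε > 0, Pr[|C − binom(k,2)/m| ≥ ε·binom(k,2)/m] ≤ (1/ε²)·O(m/k² + 1/k). -/
open MeasureTheory ProbabilityTheory Finset

/-!
Write `C` as the sum, over the pairs `i < j`, of the indicators of the events `X i = X j`. Each
has probability `1/m`, and the events of two distinct pairs are independent: some index of the
second pair lies outside the first pair, and whatever the other samples are, that fresh sample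
equals its partner with probability `1/m`. So the variances add up, `Var C ≤ binom(k,2)/m`, and
Chebyshev's inequality together with `binom(k,2) ≥ k²/4` gives the tail bound.
-/

/-- The number of pairwise collisions among `X₁,…,X_k`. -/
noncomputable def collisionCount {Ω S : Type*} [DecidableEq S] (k : ℕ)
    (X : Fin k → Ω → S) (ω : Ω) : ℝ :=
  ∑ p ∈ Finset.univ.filter (fun p : Fin k × Fin k => p.1 < p.2),
    (if X p.1 ω = X p.2 ω then (1 : ℝ) else 0)

lemma Set.setOf_eq_eq_iUnion {α S : Type*} (f g : α → S) :
    {x | f x = g x} = ⋃ s, f ⁻¹' {s} ∩ g ⁻¹' {s} := by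
  ext x
  simp [eq_comm]

lemma Prod.fst_notMem_or_snd_notMem {ι : Type*} [LinearOrder ι] {p q : ι × ι} (hp : p.1 < p.2)
    (hq : q.1 < q.2) (hpq : p ≠ q) :
    q.1 ∉ ({p.1, p.2, q.2} : Set ι) ∨ q.2 ∉ ({p.1, p.2, q.1} : Set ι) := by
  obtain ⟨a, b⟩ := p
  obtain ⟨c, d⟩ := q
  simp only [Set.mem_insert_iff, Set.mem_singleton_iff, ne_eq, Prod.mk.injEq] at *
  grind

lemma Nat.inv_choose_two_le {k : ℕ} (hk : 2 ≤ k) : ((k.choose 2 : ℝ))⁻¹ ≤ 4 / k ^ 2 := by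
  have hk' : (2 : ℝ) ≤ k := by exact_mod_cast hk
  rw [Nat.cast_choose_two, inv_div, div_le_div_iff₀ (by nlinarith) (by positivity)]
  nlinarith

namespace ProbabilityTheory

section Variance

variable {Ω : Type*} {mΩ : MeasurableSpace Ω} {μ : Measure Ω}

lemma IndepSet.indepFun_indicator_one {s t : Set Ω} (h : IndepSet s t μ) :
    IndepFun (s.indicator (1 : Ω → ℝ)) (t.indicator (1 : Ω → ℝ)) μ := by
  have measurable_indicator (u : Set Ω) :
      Measurable[MeasurableSpace.generateFrom {u}] (u.indicator (1 : Ω → ℝ)) :=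
    measurable_const.indicator (MeasurableSpace.measurableSet_generateFrom rfl)
  exact indep_of_indep_of_le h (measurable_indicator s).comap_le (measurable_indicator t).comap_le

variable [IsProbabilityMeasure μ]

lemma variance_indicator_one_le {A : Set Ω} (hA : MeasurableSet A) :
    variance (A.indicator 1) μ ≤ μ.real A := by
  have hbound : ∀ ω, A.indicator (1 : Ω → ℝ) ω ∈ Set.Icc 0 1 := fun ω => by
    by_cases h : ω ∈ A <;> simp [h]
  have := variance_le_sub_mul_sub (μ := μ) (ae_of_all _ hbound)
    (measurable_one.indicator hA).aemeasurable
  rw [integral_indicator_one hA] at this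
  nlinarith [measureReal_nonneg (μ := μ) (s := A)]

lemma variance_sum_indicator_one_le {κ : Type*} {s : Finset κ} {A : κ → Set Ω}
    (hA : ∀ p, MeasurableSet (A p)) (hindep : Set.Pairwise s fun p q => IndepSet (A p) (A q) μ) :
    variance (∑ p ∈ s, (A p).indicator 1) μ ≤ ∑ p ∈ s, μ.real (A p) := by
  rw [IndepFun.variance_sum (X := fun p => (A p).indicator 1)
    (fun p _ => memLp_indicator_const 2 (hA p) 1 (Or.inr (measure_ne_top _ _)))
    (fun p hp q hq hpq => IndepSet.indepFun_indicator_one (hindep hp hq hpq))]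
  exact Finset.sum_le_sum fun p _ => variance_indicator_one_le (hA p)

lemma measureReal_ge_mul_integral_le_of_variance_le {Y : Ω → ℝ} (hY : MemLp Y 2 μ)
    (hmean : 0 < μ[Y]) (hvar : variance Y μ ≤ μ[Y]) {ε : ℝ} (hε : 0 < ε) :
    μ.real {ω | ε * μ[Y] ≤ |Y ω - μ[Y]|} ≤ 1 / ε ^ 2 * (μ[Y])⁻¹ := by
  calc μ.real {ω | ε * μ[Y] ≤ |Y ω - μ[Y]|} ≤ variance Y μ / (ε * μ[Y]) ^ 2 :=
        ENNReal.toReal_le_of_le_ofReal (div_nonneg (variance_nonneg _ _) (sq_nonneg _))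
          (meas_ge_le_variance_div_sq hY (by positivity))
    _ ≤ μ[Y] / (ε * μ[Y]) ^ 2 := by gcongr
    _ = 1 / ε ^ 2 * (μ[Y])⁻¹ := by field_simp

end Variance

section Collision

variable {Ω ι S : Type*} {mΩ : MeasurableSpace Ω} {μ : Measure Ω} {mS : MeasurableSpace S}
  {X : ι → Ω → S}

lemma measurableSet_biSup_comap_preimage {T : Set ι} {a : ι} (ha : a ∈ T) {s : Set S}
    (hs : MeasurableSet s) : MeasurableSet[⨆ b ∈ T, mS.comap (X b)] (X a ⁻¹' s) :=
  le_iSup₂ (f := fun b (_ : b ∈ T) => mS.comap (X b)) a ha _ ⟨s, hs, rfl⟩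

variable [MeasurableSingletonClass S] [Countable S]

lemma measurableSet_biSup_comap_eq {T : Set ι} {a b : ι} (ha : a ∈ T) (hb : b ∈ T) :
    MeasurableSet[⨆ c ∈ T, mS.comap (X c)] {ω | X a ω = X b ω} := by
  rw [Set.setOf_eq_eq_iUnion]
  exact .iUnion fun s => (measurableSet_biSup_comap_preimage ha (measurableSet_singleton s)).inter
    (measurableSet_biSup_comap_preimage hb (measurableSet_singleton s))

lemma measurableSet_eq_eq (hmeas : ∀ i, Measurable (X i)) (a b : ι) :
    MeasurableSet {ω | X a ω = X b ω} :=
  iSup₂_le (fun c _ => (hmeas c).comap_le) _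
    (measurableSet_biSup_comap_eq (T := {a, b}) (by simp) (by simp))

lemma iIndepFun.measure_inter_eq_eq (hX : iIndepFun X μ) (hmeas : ∀ i, Measurable (X i))
    {T : Set ι} {i j : ι} (hi : i ∈ T) (hj : j ∉ T) {c : ENNReal}
    (hc : ∀ s, μ (X j ⁻¹' {s}) = c) {E : Set Ω}
    (hE : MeasurableSet[⨆ a ∈ T, mS.comap (X a)] E) :
    μ (E ∩ {ω | X j ω = X i ω}) = c * μ E := by
  have hindep : Indep (⨆ a ∈ T, mS.comap (X a)) (⨆ a ∈ ({j} : Set ι), mS.comap (X a)) μ :=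
    indep_iSup_of_disjoint (fun a => (hmeas a).comap_le) hX (Set.disjoint_singleton_right.mpr hj)
  have hle : ⨆ a ∈ T, mS.comap (X a) ≤ mΩ := iSup₂_le fun a _ => (hmeas a).comap_le
  have hEi : ∀ s, MeasurableSet[⨆ a ∈ T, mS.comap (X a)] (E ∩ X i ⁻¹' {s}) := fun s =>
    hE.inter (measurableSet_biSup_comap_preimage hi (measurableSet_singleton s))
  have hdisj : Pairwise (Function.onFun Disjoint fun s : S => E ∩ X i ⁻¹' {s}) :=
    fun s t hst => Set.disjoint_left.mpr fun ω hs ht => hst (hs.2.symm.trans ht.2)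
  calc μ (E ∩ {ω | X j ω = X i ω})
      = μ (⋃ s, (E ∩ X i ⁻¹' {s}) ∩ X j ⁻¹' {s}) := by
        rw [Set.setOf_eq_eq_iUnion, Set.inter_iUnion]
        congr 1
        refine Set.iUnion_congr fun s => ?_
        rw [Set.inter_comm (X j ⁻¹' {s}), Set.inter_assoc]
    _ = ∑' s, μ (E ∩ X i ⁻¹' {s}) * c := by
        rw [measure_iUnion (fun s t hst => (hdisj hst).mono Set.inter_subset_left
          Set.inter_subset_left) fun s =>
            (hle _ (hEi s)).inter (hmeas j (measurableSet_singleton s))]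
        refine tsum_congr fun s => ?_
        have hjs : MeasurableSet[⨆ a ∈ ({j} : Set ι), mS.comap (X a)] (X j ⁻¹' {s}) :=
          measurableSet_biSup_comap_preimage (Set.mem_singleton j) (measurableSet_singleton s)
        rw [(Indep_iff _ _ μ).mp hindep _ _ (hEi s) hjs, hc s]
    _ = c * μ E := by
        rw [ENNReal.tsum_mul_right, ← measure_iUnion hdisj fun s => hle _ (hEi s), mul_comm,
          ← Set.inter_iUnion, ← Set.preimage_iUnion, Set.iUnion_of_singleton, Set.preimage_univ,
          Set.inter_univ]

variable [IsProbabilityMeasure μ] {c : ENNReal}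

lemma iIndepFun.measure_eq_eq (hX : iIndepFun X μ) (hmeas : ∀ i, Measurable (X i))
    (hc : ∀ i s, μ (X i ⁻¹' {s}) = c) {i j : ι} (hij : i ≠ j) :
    μ {ω | X i ω = X j ω} = c := by
  simpa using hX.measure_inter_eq_eq hmeas (Set.mem_singleton j) hij (hc i) MeasurableSet.univ

lemma iIndepFun.measure_eq_inter_eq (hX : iIndepFun X μ) (hmeas : ∀ i, Measurable (X i))
    (hc : ∀ i s, μ (X i ⁻¹' {s}) = c) {i j i' j' : ι} (hij : i ≠ j)
    (hj' : j' ∉ ({i, j, i'} : Set ι)) :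
    μ ({ω | X i ω = X j ω} ∩ {ω | X j' ω = X i' ω}) = c * c := by
  rw [hX.measure_inter_eq_eq hmeas (by simp) hj' (hc j') (measurableSet_biSup_comap_eq
    (by simp) (by simp)), hX.measure_eq_eq hmeas hc hij]

lemma iIndepFun.indepSet_eq_eq [LinearOrder ι] (hX : iIndepFun X μ)
    (hmeas : ∀ i, Measurable (X i)) (hc : ∀ i s, μ (X i ⁻¹' {s}) = c) {p q : ι × ι}
    (hp : p.1 < p.2) (hq : q.1 < q.2) (hpq : p ≠ q) :
    IndepSet {ω | X p.1 ω = X p.2 ω} {ω | X q.1 ω = X q.2 ω} μ := by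
  rw [indepSet_iff_measure_inter_eq_mul (measurableSet_eq_eq hmeas _ _)
    (measurableSet_eq_eq hmeas _ _) μ, hX.measure_eq_eq hmeas hc hp.ne,
    hX.measure_eq_eq hmeas hc hq.ne]
  rcases Prod.fst_notMem_or_snd_notMem hp hq hpq with hfresh | hfresh
  · exact hX.measure_eq_inter_eq hmeas hc hp.ne hfresh
  · simp_rw [eq_comm (a := X q.1 _)]
    exact hX.measure_eq_inter_eq hmeas hc hp.ne hfresh

lemma iIndepFun.sum_measureReal_eq_eq [Fintype ι] [LinearOrder ι] (hX : iIndepFun X μ)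
    (hmeas : ∀ i, Measurable (X i)) (hc : ∀ i s, μ (X i ⁻¹' {s}) = c) :
    ∑ p ∈ univ.filter (fun p : ι × ι => p.1 < p.2), μ.real {ω | X p.1 ω = X p.2 ω}
      = (Fintype.card ι).choose 2 * c.toReal := by
  rw [Finset.sum_congr rfl fun p hp => by
    rw [measureReal_def, hX.measure_eq_eq hmeas hc (mem_filter.mp hp).2.ne], sum_const,
    Fintype.card_product_filter_lt, nsmul_eq_mul]

end Collision

section CollisionCount

variable {Ω S : Type*} [DecidableEq S] {k : ℕ}

lemma collisionCount_eq_sum_indicator (X : Fin k → Ω → S) :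
    collisionCount k X = ∑ p ∈ univ.filter (fun p : Fin k × Fin k => p.1 < p.2),
      {ω | X p.1 ω = X p.2 ω}.indicator 1 := by
  ext ω
  simp [collisionCount, Finset.sum_apply, Set.indicator_apply]

variable {mΩ : MeasurableSpace Ω} {μ : Measure Ω} [IsProbabilityMeasure μ]
  [MeasurableSpace S] [MeasurableSingletonClass S] [Countable S] {X : Fin k → Ω → S}

lemma memLp_collisionCount (hmeas : ∀ i, Measurable (X i)) : MemLp (collisionCount k X) 2 μ := by
  rw [collisionCount_eq_sum_indicator]
  exact memLp_finsetSum' _ fun p _ =>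
    memLp_indicator_const 2 (measurableSet_eq_eq hmeas _ _) 1 (Or.inr (measure_ne_top _ _))

variable {c : ENNReal} (hX : iIndepFun X μ) (hmeas : ∀ i, Measurable (X i))
  (hc : ∀ i s, μ (X i ⁻¹' {s}) = c)
include hX hmeas hc

lemma integral_collisionCount : μ[collisionCount k X] = k.choose 2 * c.toReal := by
  simp only [collisionCount_eq_sum_indicator, Finset.sum_apply]
  rw [integral_finsetSum _ fun p _ =>
    (integrable_const 1).indicator (measurableSet_eq_eq hmeas _ _)]
  simp only [integral_indicator_one (measurableSet_eq_eq hmeas _ _)]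
  simpa using hX.sum_measureReal_eq_eq hmeas hc

lemma variance_collisionCount_le : variance (collisionCount k X) μ ≤ k.choose 2 * c.toReal := by
  have hsum := hX.sum_measureReal_eq_eq hmeas hc
  rw [Fintype.card_fin] at hsum
  rw [collisionCount_eq_sum_indicator, ← hsum]
  exact variance_sum_indicator_one_le (fun p => measurableSet_eq_eq hmeas _ _)
    fun p hp q hq hpq => hX.indepSet_eq_eq hmeas hc (mem_filter.mp hp).2 (mem_filter.mp hq).2 hpq

end CollisionCount

end ProbabilityTheory

theorem stmt11_general {Ω : Type*} [MeasureSpace Ω] [IsProbabilityMeasure (ℙ : Measure Ω)]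
    {S : Type*} [Fintype S] [DecidableEq S] [MeasurableSpace S]
    [MeasurableSingletonClass S]
    (m k : ℕ) (hm : 1 ≤ m) (hk : 2 ≤ k)
    (X : Fin k → Ω → S) (hmeas : ∀ i, Measurable (X i))
    (hindep : iIndepFun X ℙ)
    (hunif : ∀ (i : Fin k) (s : S), (ℙ {ω | X i ω = s}).toReal = 1 / m)
    (ε : ℝ) (hε : 0 < ε) :
    variance (collisionCount k X) ℙ ≤ (k.choose 2 : ℝ) / m + (k : ℝ) ^ 3 / m ^ 2
    ∧ (ℙ {ω | ε * ((k.choose 2 : ℝ) / m)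
          ≤ |collisionCount k X ω - (k.choose 2 : ℝ) / m|}).toReal
        ≤ (1 / ε ^ 2) * (16 * ((m : ℝ) / k ^ 2 + 1 / k)) := by
  have hunif' : ∀ i s, ℙ (X i ⁻¹' {s}) = ENNReal.ofReal (1 / m) := fun i s => by
    rw [← hunif i s, ENNReal.ofReal_toReal (measure_ne_top _ _)]
    rfl
  have hmean := integral_collisionCount hindep hmeas hunif'
  have hvar := variance_collisionCount_le hindep hmeas hunif'
  rw [ENNReal.toReal_ofReal (by positivity), mul_one_div] at hmean hvar
  refine ⟨hvar.trans (le_add_of_nonneg_right (by positivity)), ?_⟩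
  have hmean_pos : (0 : ℝ) < k.choose 2 / m := by
    have := Nat.choose_pos hk
    positivity
  have hcheb := measureReal_ge_mul_integral_le_of_variance_le (memLp_collisionCount hmeas)
    (hmean ▸ hmean_pos) (hmean ▸ hvar) hε
  rw [hmean] at hcheb
  refine hcheb.trans (mul_le_mul_of_nonneg_left ?_ (by positivity))
  calc ((k.choose 2 : ℝ) / m)⁻¹ = m * ((k.choose 2 : ℝ))⁻¹ := by
        rw [inv_div, div_eq_mul_inv]
    _ ≤ m * (4 / k ^ 2) := by gcongr; exact Nat.inv_choose_two_le hk
    _ = 4 * (m / k ^ 2) := by ring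
    _ ≤ 16 * (m / k ^ 2 + 1 / k) := by
        have : (0 : ℝ) ≤ m / k ^ 2 := by positivity
        have : (0 : ℝ) ≤ 1 / k := by positivity
        linarith

/-- For the collision count `C` of `k` i.i.d. samples uniform over a set of size
`m`, `Var[C] ≤ binom(k,2)/m + k³/m²`, and by Chebyshev's inequality
`Pr[|C − binom(k,2)/m| ≥ ε·binom(k,2)/m] ≤ (1/ε²)·O(m/k² + 1/k)`
(with explicit constant 16). -/
theorem stmt11 {Ω : Type*} [MeasureSpace Ω] [IsProbabilityMeasure (ℙ : Measure Ω)]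
    {S : Type*} [Fintype S] [DecidableEq S] [MeasurableSpace S]
    [MeasurableSingletonClass S]
    (m k : ℕ) (hmS : Fintype.card S = m) (hm : 1 ≤ m) (hk : 2 ≤ k)
    (X : Fin k → Ω → S) (hmeas : ∀ i, Measurable (X i))
    (hindep : iIndepFun X ℙ)
    (hunif : ∀ (i : Fin k) (s : S), (ℙ {ω | X i ω = s}).toReal = 1 / m)
    (ε : ℝ) (hε : 0 < ε) :
    variance (collisionCount k X) ℙ ≤ (k.choose 2 : ℝ) / m + (k : ℝ) ^ 3 / m ^ 2
    ∧ (ℙ {ω | ε * ((k.choose 2 : ℝ) / m)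
          ≤ |collisionCount k X ω - (k.choose 2 : ℝ) / m|}).toReal
        ≤ (1 / ε ^ 2) * (16 * ((m : ℝ) / k ^ 2 + 1 / k)) :=
  stmt11_general m k hm hk X hmeas hindep hunif ε hε
end
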